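/- Let J be an invertible matrix, M⁻¹ = M₂⁻¹ (I − J M₁⁻¹) + M₁⁻¹ the two-stage preconditioner, and suppose ‖I − M₁⁻¹ J‖ ≤ ρ₁ and ‖I − M₂⁻¹ J‖ ≤ ρ₂ for a submultiplicative matrix norm. Then ‖I − M⁻¹ J‖ ≤ ρ₁ ρ₂; in particular, if ρ₁ ρ₂ < 1 then M⁻¹ J is invertible. -/

import Mathlib

/-! The error propagator `1 - M⁻¹ J` of the two-stage preconditioner factors as
`(1 - M₂⁻¹ J) (1 - M₁⁻¹ J)`, so submultiplicativity gives the bound `ρ₁ ρ₂`, and a Neumann series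
inverts `M⁻¹ J` once that bound is below `1`. -/

open Matrix

attribute [local instance] Matrix.linftyOpNormedRing

section TwoStage

variable {R : Type*}

/-- The two-stage preconditioner `M⁻¹ = M₂⁻¹ (1 - J M₁⁻¹) + M₁⁻¹`, with `A = M₁⁻¹`, `B = M₂⁻¹`. -/
def twoStagePrecond [Ring R] (J A B : R) : R := B * (1 - J * A) + A

theorem one_sub_twoStagePrecond_mul [Ring R] (J A B : R) :
    1 - twoStagePrecond J A B * J = (1 - B * J) * (1 - A * J) := by
  unfold twoStagePrecond
  noncomm_ring

theorem norm_one_sub_twoStagePrecond_mul_le [NormedRing R] (J A B : R) :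
    ‖1 - twoStagePrecond J A B * J‖ ≤ ‖1 - B * J‖ * ‖1 - A * J‖ := by
  rw [one_sub_twoStagePrecond_mul]
  exact norm_mul_le _ _

end TwoStage

theorem isUnit_of_norm_one_sub_lt_one {R : Type*} [NormedRing R] [HasSummableGeomSeries R] {x : R}
    (h : ‖1 - x‖ < 1) : IsUnit x := by
  simpa using isUnit_one_sub_of_norm_lt_one h

theorem stmt17_general {n : Type*} [Fintype n] [DecidableEq n]
    (J M₁inv M₂inv : Matrix n n ℝ)
    (ρ₁ ρ₂ : ℝ) (hρ₂ : 0 ≤ ρ₂)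
    (h₁ : ‖1 - M₁inv * J‖ ≤ ρ₁) (h₂ : ‖1 - M₂inv * J‖ ≤ ρ₂) :
    ‖1 - (M₂inv * (1 - J * M₁inv) + M₁inv) * J‖ ≤ ρ₁ * ρ₂ ∧
    (ρ₁ * ρ₂ < 1 → IsUnit ((M₂inv * (1 - J * M₁inv) + M₁inv) * J)) := by
  have hbound : ‖1 - twoStagePrecond J M₁inv M₂inv * J‖ ≤ ρ₁ * ρ₂ :=
    calc ‖1 - twoStagePrecond J M₁inv M₂inv * J‖
        ≤ ‖1 - M₂inv * J‖ * ‖1 - M₁inv * J‖ := norm_one_sub_twoStagePrecond_mul_le J M₁inv M₂inv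
      _ ≤ ρ₂ * ρ₁ := mul_le_mul h₂ h₁ (norm_nonneg _) hρ₂
      _ = ρ₁ * ρ₂ := mul_comm _ _
  -- `hcomplete` is stated for the entrywise uniform structure on matrices, which agrees with
  -- that of the `‖·‖∞` norm only after unfolding, so instance search needs the explicit term.
  have hcomplete : CompleteSpace (Matrix n n ℝ) := FiniteDimensional.complete ℝ _
  have : HasSummableGeomSeries (Matrix n n ℝ) :=
    @instHasSummableGeomSeriesOfCompleteSpace _ _ hcomplete
  exact ⟨hbound, fun hlt => isUnit_of_norm_one_sub_lt_one (hbound.trans_lt hlt)⟩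

theorem stmt17 {n : Type*} [Fintype n] [DecidableEq n]
    (J M₁inv M₂inv : Matrix n n ℝ) (hJ : IsUnit J)
    (ρ₁ ρ₂ : ℝ) (hρ₁ : 0 ≤ ρ₁) (hρ₂ : 0 ≤ ρ₂)
    (h₁ : ‖1 - M₁inv * J‖ ≤ ρ₁) (h₂ : ‖1 - M₂inv * J‖ ≤ ρ₂) :
    ‖1 - (M₂inv * (1 - J * M₁inv) + M₁inv) * J‖ ≤ ρ₁ * ρ₂ ∧
    (ρ₁ * ρ₂ < 1 → IsUnit ((M₂inv * (1 - J * M₁inv) + M₁inv) * J)) :=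
  stmt17_general J M₁inv M₂inv ρ₁ ρ₂ hρ₂ h₁ h₂
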